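/- Fix α ∈ ℂ with α ≠ 0 and let B_α be ℂ³ with basis x, y, z and bilinear multiplication whose only nonzero products of basis elements are z·y = y and z·x = αx (this makes B_α a Leibniz algebra). If α ≠ 1, then every t = c₁x + c₂y + c₃z with c₁ ≠ 0, c₂ ≠ 0, c₃ ≠ 0 satisfies that {t, t², t³} is linearly independent, so B_α is cyclic; if α = 1, then B_α is not cyclic (no t ∈ B_α has {t, t², t³} linearly independent). -/

import Mathlib

/-- `lpow μ x k` is the left-normed power `x^(k+1)`; so `lpow μ x 0 = x`,
`lpow μ x 1 = x·x = x²`, `lpow μ x 2 = x·x² = x³`, etc. -/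
def lpow {A : Type*} [AddCommGroup A] [Module ℂ A]
    (μ : A →ₗ[ℂ] A →ₗ[ℂ] A) (x : A) : ℕ → A
  | 0 => x
  | n + 1 => μ x (lpow μ x n)
/-- The algebra B_α = ℂ³ with basis x = e₀, y = e₁, z = e₂ whose only nonzero products
of basis elements are z·y = y and z·x = αx; thus u·v = u₂ • L_z(v) with
L_z(x) = αx, L_z(y) = y, L_z(z) = 0. -/
noncomputable def mulB (α : ℂ) : (Fin 3 → ℂ) →ₗ[ℂ] (Fin 3 → ℂ) →ₗ[ℂ] (Fin 3 → ℂ) :=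
  (LinearMap.proj 2).smulRight (Matrix.mulVecLin !![α,0,0;0,1,0;0,0,0])

noncomputable def xB : Fin 3 → ℂ := ![1,0,0]
noncomputable def yB : Fin 3 → ℂ := ![0,1,0]
noncomputable def zB : Fin 3 → ℂ := ![0,0,1]

/-! Left multiplication by `u` is `u₂ • L` with `L = diag(α, 1, 0)`, so the powers of `t` are
`t^(k+1) = t₂^k • (α^k t₀, t₁, 0)` for `k ≥ 1`. Hence `det [t, t², t³] = α (1 - α) t₀ t₁ t₂⁴`,
which is nonzero when `α ∉ {0, 1}` and all coordinates of `t` are nonzero; for `α = 1` instead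
`t³ = t₂ • t²`. -/

open Module

lemma exists_basis_lpow_of_linearIndependent {A : Type*} [AddCommGroup A] [Module ℂ A]
    {n : ℕ} [NeZero n] (μ : A →ₗ[ℂ] A →ₗ[ℂ] A) {t : A}
    (ht : LinearIndependent ℂ fun i : Fin n ↦ lpow μ t i) (hn : finrank ℂ A = n) :
    ∃ e : Basis (Fin n) ℂ A, ∀ i, e i = lpow μ t i :=
  ⟨basisOfLinearIndependentOfCardEqFinrank ht (by simp [hn]), by simp⟩

lemma vec3_lpow_eq_lpow {A : Type*} [AddCommGroup A] [Module ℂ A]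
    (μ : A →ₗ[ℂ] A →ₗ[ℂ] A) (t : A) :
    ![t, lpow μ t 1, lpow μ t 2] = fun i : Fin 3 ↦ lpow μ t i := by
  funext i
  fin_cases i <;> rfl

lemma mulB_apply (α : ℂ) (u v : Fin 3 → ℂ) :
    mulB α u v = u 2 • ![α * v 0, v 1, 0] := by
  funext i
  fin_cases i <;>
    simp [mulB, dotProduct, Fin.sum_univ_three, mul_comm]

lemma lpow_mulB_succ (α : ℂ) (t : Fin 3 → ℂ) (k : ℕ) :
    lpow (mulB α) t (k + 1) = t 2 ^ (k + 1) • ![α ^ (k + 1) * t 0, t 1, 0] := by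
  induction k with
  | zero => simp [lpow, mulB_apply]
  | succ k ih =>
    rw [lpow, ih, mulB_apply]
    simp only [Pi.smul_apply, Matrix.smul_cons, smul_eq_mul, mul_zero, Matrix.smul_empty,
      Matrix.cons_val_zero, Matrix.cons_val_one]
    ring_nf

lemma det_lpow_mulB (α : ℂ) (t : Fin 3 → ℂ) :
    (Matrix.of ![t, lpow (mulB α) t 1, lpow (mulB α) t 2]).det
      = α * (1 - α) * t 0 * t 1 * t 2 ^ 4 := by
  rw [lpow_mulB_succ, lpow_mulB_succ, Matrix.det_fin_three]
  simp only [Fin.isValue, zero_add, pow_one, Matrix.smul_cons, smul_eq_mul, mul_zero,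
    Matrix.smul_empty, Matrix.of_apply, Matrix.cons_val', Matrix.cons_val_zero,
    Matrix.cons_val_fin_one, Matrix.cons_val_one, Matrix.cons_val, zero_mul, sub_self, add_zero]
  ring

lemma linearIndependent_lpow_mulB {α : ℂ} (hα : α ≠ 0) (hα1 : α ≠ 1) {t : Fin 3 → ℂ}
    (ht₀ : t 0 ≠ 0) (ht₁ : t 1 ≠ 0) (ht₂ : t 2 ≠ 0) :
    LinearIndependent ℂ ![t, lpow (mulB α) t 1, lpow (mulB α) t 2] := by
  have hα1' : 1 - α ≠ 0 := sub_ne_zero.mpr (Ne.symm hα1)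
  have hdet : (Matrix.of ![t, lpow (mulB α) t 1, lpow (mulB α) t 2]).det ≠ 0 := by
    rw [det_lpow_mulB]
    positivity
  exact Matrix.linearIndependent_rows_of_det_ne_zero hdet

lemma not_linearIndependent_lpow_mulB_one (t : Fin 3 → ℂ) :
    ¬ LinearIndependent ℂ ![t, lpow (mulB 1) t 1, lpow (mulB 1) t 2] := by
  have h : lpow (mulB 1) t 2 = t 2 • lpow (mulB 1) t 1 := by
    rw [lpow_mulB_succ, lpow_mulB_succ, smul_smul, ← pow_succ']
    simp
  rw [Fintype.linearIndependent_iff]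
  push Not
  refine ⟨![0, t 2, -1], ?_, 2, by simp⟩
  simp [Fin.sum_univ_three, h]

lemma smul_xB_add_smul_yB_add_smul_zB (c₁ c₂ c₃ : ℂ) :
    c₁ • xB + c₂ • yB + c₃ • zB = ![c₁, c₂, c₃] := by
  funext i
  fin_cases i <;> simp [xB, yB, zB]

/-- For α ≠ 0: if α ≠ 1, every t = c₁x + c₂y + c₃z with
c₁, c₂, c₃ ≠ 0 has {t, t², t³} linearly independent, so B_α is cyclic;
if α = 1, B_α is not cyclic. -/
theorem algebraB_cyclic_iff (α : ℂ) (hα : α ≠ 0) :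
    (α ≠ 1 →
      (∀ c₁ c₂ c₃ : ℂ, c₁ ≠ 0 → c₂ ≠ 0 → c₃ ≠ 0 →
        LinearIndependent ℂ
          ![c₁ • xB + c₂ • yB + c₃ • zB,
            lpow (mulB α) (c₁ • xB + c₂ • yB + c₃ • zB) 1,
            lpow (mulB α) (c₁ • xB + c₂ • yB + c₃ • zB) 2]) ∧
      (∃ t : Fin 3 → ℂ, ∃ e : Module.Basis (Fin 3) ℂ (Fin 3 → ℂ),
          ∀ i : Fin 3, e i = lpow (mulB α) t (i : ℕ))) ∧
    (α = 1 →
      ¬ ∃ t : Fin 3 → ℂ,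
          LinearIndependent ℂ ![t, lpow (mulB α) t 1, lpow (mulB α) t 2]) := by
  refine ⟨fun hα1 ↦ ⟨fun c₁ c₂ c₃ h₁ h₂ h₃ ↦ ?_, ?_⟩, ?_⟩
  · rw [smul_xB_add_smul_yB_add_smul_zB]
    exact linearIndependent_lpow_mulB hα hα1 (by simpa) (by simpa) (by simpa)
  · refine ⟨![1, 1, 1], exists_basis_lpow_of_linearIndependent _ ?_ (finrank_fin_fun ℂ)⟩
    rw [← vec3_lpow_eq_lpow]
    exact linearIndependent_lpow_mulB hα hα1 (by simp) (by simp) (by simp)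
  · rintro rfl ⟨t, ht⟩
    exact not_linearIndependent_lpow_mulB_one t ht
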